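/- arXiv:2511.15642 — 3 statements merged into one kernel-verified Lean document; each statement's English description precedes it below -/
import Mathlib

section
/- Let G be the complete graph on a finite vertex set V, let τ ∈ [0, 1] be a real tolerance, and let c be a configuration with exactly a vertices occupied by type-A agents and exactly b vertices occupied by type-B agents, where a ≥ 1 and b ≥ 1. Then every agent in c is satisfied at tolerance τ if and only if max(a, b) ≤ τ · (a + b − 1). (This establishes the correctness of the constant-time Simulate_Clique decision procedure, which returns 0 under this condition and ∞ otherwise.) -/
/-- An agent is of one of two types, `A` or `B`. -/
inductive Agent : Type
  | A : Agent
  | B : Agent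
  deriving DecidableEq

/-- The opposite type of an agent type. -/
def Agent.other : Agent → Agent
  | .A => .B
  | .B => .A

/-- The number of occupied neighbors of `v` in graph `G` under configuration `c`. -/
def occNbrCount {V : Type*} [Fintype V] (G : SimpleGraph V) [DecidableRel G.Adj]
    (c : V → Option Agent) (v : V) : ℕ :=
  ((G.neighborFinset v).filter (fun u => c u ≠ none)).card

/-- The number of neighbors of `v` occupied by an agent of the type opposite to the
agent at `v` (and `0` if `v` is unoccupied). -/
def otherTypeCount {V : Type*} [Fintype V] (G : SimpleGraph V) [DecidableRel G.Adj]
    (c : V → Option Agent) (v : V) : ℕ :=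
  match c v with
  | none => 0
  | some t => ((G.neighborFinset v).filter (fun u => c u = some t.other)).card

/-- The agent at `v` is satisfied at tolerance `τ` when its other-type count is at most
`τ` times its occupied-neighbor count. -/
def satisfiedAt {V : Type*} [Fintype V] (G : SimpleGraph V) [DecidableRel G.Adj]
    (τ : ℝ) (c : V → Option Agent) (v : V) : Prop :=
  (otherTypeCount G c v : ℝ) ≤ τ * (occNbrCount G c v : ℝ)

/-! In the complete graph every occupied vertex sees every other agent: its occupied-neighbor
count is `a + b - 1`, and its other-type count is the total number of agents of the other type.
So an `A`-agent is satisfied iff `b ≤ τ (a + b - 1)` and a `B`-agent iff `a ≤ τ (a + b - 1)`;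
since both types occur, all agents are satisfied iff both inequalities hold. -/

open Finset

lemma Agent.ne_other (t : Agent) : t ≠ t.other := by
  cases t <;> decide

lemma Agent.forall_agent {p : Agent → Prop} : (∀ t, p t) ↔ p .A ∧ p .B :=
  ⟨fun h => ⟨h _, h _⟩, fun ⟨hA, hB⟩ t => by cases t <;> assumption⟩

section CompleteGraph

variable {V : Type*} [Fintype V] (c : V → Option Agent)

def typeCount (t : Agent) : ℕ := #{v | c v = some t}

variable {c}

lemma exists_eq_some_of_one_le_typeCount {t : Agent} (h : 1 ≤ typeCount c t) :
    ∃ v, c v = some t := by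
  obtain ⟨v, hv⟩ := card_pos.mp h
  exact ⟨v, (mem_filter.mp hv).2⟩

variable (c) [DecidableEq V]

lemma card_occupied_eq_typeCount_add :
    #{v | c v ≠ none} = typeCount c .A + typeCount c .B := by
  rw [typeCount, typeCount, ← card_union_of_disjoint]
  · congr 1
    ext v
    rcases h : c v with _ | _ | _ <;> simp [h]
  · exact disjoint_filter.mpr fun v _ hA hB => by simp [hA] at hB

lemma filter_neighborFinset_top (v : V) (p : V → Prop) [DecidablePred p] :
    ((⊤ : SimpleGraph V).neighborFinset v).filter p = (univ.filter p).erase v := by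
  ext u
  simp [and_comm]

variable {c}

lemma occNbrCount_top_add_one {v : V} (hv : c v ≠ none) :
    occNbrCount ⊤ c v + 1 = typeCount c .A + typeCount c .B := by
  rw [occNbrCount, filter_neighborFinset_top,
    card_erase_add_one (mem_filter.mpr ⟨mem_univ v, hv⟩), card_occupied_eq_typeCount_add]

lemma otherTypeCount_top {v : V} {t : Agent} (hv : c v = some t) :
    otherTypeCount ⊤ c v = typeCount c t.other := by
  rw [otherTypeCount, hv]
  dsimp only
  rw [filter_neighborFinset_top, erase_eq_of_notMem (by simp [hv, t.ne_other]), typeCount]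

lemma satisfiedAt_top_iff {τ : ℝ} {v : V} {t : Agent} (hv : c v = some t) :
    satisfiedAt ⊤ τ c v ↔
      (typeCount c t.other : ℝ) ≤ τ * (typeCount c .A + typeCount c .B - 1) := by
  have hocc : (occNbrCount ⊤ c v : ℝ) = typeCount c .A + typeCount c .B - 1 := by
    have := occNbrCount_top_add_one (hv ▸ Option.some_ne_none t)
    rw [eq_sub_iff_add_eq]
    exact_mod_cast this
  rw [satisfiedAt, otherTypeCount_top hv, hocc]

variable (c)

lemma forall_satisfiedAt_top_iff (τ : ℝ) :
    (∀ v, c v ≠ none → satisfiedAt ⊤ τ c v) ↔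
      ∀ t, (∃ v, c v = some t) →
        (typeCount c t.other : ℝ) ≤ τ * (typeCount c .A + typeCount c .B - 1) := by
  constructor
  · rintro h t ⟨v, hv⟩
    exact (satisfiedAt_top_iff hv).mp (h v (hv ▸ Option.some_ne_none t))
  · intro h v hv
    obtain ⟨t, ht⟩ := Option.ne_none_iff_exists'.mp hv
    exact (satisfiedAt_top_iff ht).mpr (h t ⟨v, ht⟩)

end CompleteGraph

theorem clique_satisfaction_iff_general {V : Type*} [Fintype V] [DecidableEq V]
    (τ : ℝ)
    (c : V → Option Agent) (a b : ℕ)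
    (ha : (Finset.univ.filter (fun v => c v = some Agent.A)).card = a)
    (hb : (Finset.univ.filter (fun v => c v = some Agent.B)).card = b)
    (ha1 : 1 ≤ a) (hb1 : 1 ≤ b) :
    (∀ v : V, c v ≠ none → satisfiedAt (⊤ : SimpleGraph V) τ c v) ↔
      (max a b : ℝ) ≤ τ * ((a : ℝ) + (b : ℝ) - 1) := by
  have hA : typeCount c .A = a := ha
  have hB : typeCount c .B = b := hb
  have exists_A := exists_eq_some_of_one_le_typeCount (hA ▸ ha1)
  have exists_B := exists_eq_some_of_one_le_typeCount (hB ▸ hb1)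
  rw [forall_satisfiedAt_top_iff, Agent.forall_agent, max_le_iff, and_comm]
  simp only [Agent.other, hA, hB, exists_A, exists_B, forall_const]

/-- On the complete graph with exactly `a ≥ 1` type-`A` agents and exactly `b ≥ 1`
type-`B` agents, every agent is satisfied at tolerance `τ ∈ [0,1]` if and only if
`max a b ≤ τ * (a + b - 1)`: correctness of the constant-time `Simulate_Clique`
decision procedure. -/
theorem clique_satisfaction_iff {V : Type*} [Fintype V] [DecidableEq V]
    (τ : ℝ) (hτ : τ ∈ Set.Icc (0 : ℝ) 1)
    (c : V → Option Agent) (a b : ℕ)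
    (ha : (Finset.univ.filter (fun v => c v = some Agent.A)).card = a)
    (hb : (Finset.univ.filter (fun v => c v = some Agent.B)).card = b)
    (ha1 : 1 ≤ a) (hb1 : 1 ≤ b) :
    (∀ v : V, c v ≠ none → satisfiedAt (⊤ : SimpleGraph V) τ c v) ↔
      (max a b : ℝ) ≤ τ * ((a : ℝ) + (b : ℝ) - 1) :=
  clique_satisfaction_iff_general τ c a b ha hb ha1 hb1
end

section
/- Let G be the complete graph on a finite vertex set V, let τ ∈ [0, 1], and let c₀, c₁, c₂, … be any sequence of configurations on G such that every cₜ has exactly a vertices occupied by type-A agents and exactly b vertices occupied by type-B agents, where a ≥ 1 and b ≥ 1. Then for every t, all agents in cₜ are satisfied at tolerance τ if and only if all agents in c₀ are satisfied at tolerance τ. Consequently, the first time at which global satisfaction holds is either 0 (if max(a, b) ≤ τ · (a + b − 1)) or does not exist (otherwise): the number of moves to global satisfaction on a clique is exactly 0 or ∞. -/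
/-- Global satisfaction: every occupied vertex is satisfied. -/
def globallySatisfied {V : Type*} [Fintype V] (G : SimpleGraph V) [DecidableRel G.Adj]
    (τ : ℝ) (c : V → Option Agent) : Prop :=
  ∀ v : V, c v ≠ none → satisfiedAt G τ c v

lemma nbr_top {V : Type*} [Fintype V] [DecidableEq V] (v : V) :
    (⊤ : SimpleGraph V).neighborFinset v = Finset.univ.erase v := by
  ext u
  simp [SimpleGraph.mem_neighborFinset, ne_comm]

lemma key {V : Type*} [Fintype V] [DecidableEq V] (τ : ℝ)
    (c : V → Option Agent) (a b : ℕ)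
    (ha : (Finset.univ.filter (fun v => c v = some Agent.A)).card = a)
    (hb : (Finset.univ.filter (fun v => c v = some Agent.B)).card = b)
    (ha1 : 1 ≤ a) (hb1 : 1 ≤ b) :
    globallySatisfied (⊤ : SimpleGraph V) τ c ↔
      (max a b : ℝ) ≤ τ * ((a : ℝ) + (b : ℝ) - 1) := by
  set sA := Finset.univ.filter (fun v => c v = some Agent.A) with hsA
  set sB := Finset.univ.filter (fun v => c v = some Agent.B) with hsB
  have hocc : Finset.univ.filter (fun v => c v ≠ none) = sA ∪ sB := by
    rw [hsA, hsB, ← Finset.filter_or]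
    apply Finset.filter_congr
    intro v _
    rcases h : c v with _ | t
    · simp
    · cases t <;> simp
  have hdisj : Disjoint sA sB := by
    rw [Finset.disjoint_left]
    intro v hva hvb
    simp [hsA, hsB] at hva hvb
    rw [hva] at hvb; exact Agent.noConfusion (Option.some.inj hvb)
  have hocc_card : (Finset.univ.filter (fun v => c v ≠ none)).card = a + b := by
    rw [hocc, Finset.card_union_of_disjoint hdisj, ha, hb]
  -- per-vertex computations
  have hoccN : ∀ v : V, c v ≠ none →
      occNbrCount (⊤ : SimpleGraph V) c v = a + b - 1 := by
    intro v hv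
    unfold occNbrCount
    rw [nbr_top, Finset.filter_erase, Finset.card_erase_of_mem, hocc_card]
    simp [hv]
  have hotherA : ∀ v : V, c v = some Agent.A →
      otherTypeCount (⊤ : SimpleGraph V) c v = b := by
    intro v hv
    unfold otherTypeCount
    rw [hv, nbr_top]
    show (Finset.filter (fun u => c u = some Agent.B) (Finset.univ.erase v)).card = b
    rw [Finset.filter_erase, Finset.erase_eq_of_notMem (by simp [hv]), ← hsB, hb]
  have hotherB : ∀ v : V, c v = some Agent.B →
      otherTypeCount (⊤ : SimpleGraph V) c v = a := by
    intro v hv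
    unfold otherTypeCount
    rw [hv, nbr_top]
    show (Finset.filter (fun u => c u = some Agent.A) (Finset.univ.erase v)).card = a
    rw [Finset.filter_erase, Finset.erase_eq_of_notMem (by simp [hv]), ← hsA, ha]
  have hcast : ((a + b - 1 : ℕ) : ℝ) = (a : ℝ) + (b : ℝ) - 1 := by
    have : 1 ≤ a + b := le_trans ha1 (Nat.le_add_right a b)
    push_cast [this]
    ring
  obtain ⟨vA, hvA⟩ := Finset.card_pos.mp (ha ▸ ha1)
  obtain ⟨vB, hvB⟩ := Finset.card_pos.mp (hb ▸ hb1)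
  rw [hsA, Finset.mem_filter] at hvA
  rw [hsB, Finset.mem_filter] at hvB
  constructor
  · intro hg
    have h1 := hg vA (by simp [hvA.2])
    have h2 := hg vB (by simp [hvB.2])
    unfold satisfiedAt at h1 h2
    rw [hotherA vA hvA.2, hoccN vA (by simp [hvA.2]), hcast] at h1
    rw [hotherB vB hvB.2, hoccN vB (by simp [hvB.2]), hcast] at h2
    rw [max_le_iff]
    exact ⟨h2, h1⟩
  · intro h v hv
    rw [max_le_iff] at h
    unfold satisfiedAt
    rw [hoccN v hv, hcast]
    rcases hcv : c v with _ | t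
    · exact absurd hcv hv
    · cases t
      · rw [hotherA v hcv]; exact h.2
      · rw [hotherB v hcv]; exact h.1

/-- Along any sequence of configurations on the complete graph, each with exactly
`a ≥ 1` type-`A` agents and exactly `b ≥ 1` type-`B` agents, global satisfaction at
any time `t` is equivalent to global satisfaction at time `0`. Consequently the first
time at which global satisfaction holds is `0` (when `max a b ≤ τ (a + b - 1)`) or
does not exist (otherwise): the number of moves to global satisfaction on a clique is
exactly `0` or `∞`. -/
theorem clique_global_satisfaction_zero_or_never {V : Type*} [Fintype V] [DecidableEq V]
    (τ : ℝ) (hτ : τ ∈ Set.Icc (0 : ℝ) 1)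
    (c : ℕ → V → Option Agent) (a b : ℕ)
    (ha : ∀ t : ℕ, (Finset.univ.filter (fun v => c t v = some Agent.A)).card = a)
    (hb : ∀ t : ℕ, (Finset.univ.filter (fun v => c t v = some Agent.B)).card = b)
    (ha1 : 1 ≤ a) (hb1 : 1 ≤ b) :
    (∀ t : ℕ, globallySatisfied (⊤ : SimpleGraph V) τ (c t) ↔
        globallySatisfied (⊤ : SimpleGraph V) τ (c 0)) ∧
    ((max a b : ℝ) ≤ τ * ((a : ℝ) + (b : ℝ) - 1) →
        globallySatisfied (⊤ : SimpleGraph V) τ (c 0)) ∧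
    (¬ ((max a b : ℝ) ≤ τ * ((a : ℝ) + (b : ℝ) - 1)) →
        ∀ t : ℕ, ¬ globallySatisfied (⊤ : SimpleGraph V) τ (c t)) := by
  refine ⟨fun t => ?_, fun h => ?_, fun h t hg => ?_⟩
  · rw [key τ (c t) a b (ha t) (hb t) ha1 hb1, key τ (c 0) a b (ha 0) (hb 0) ha1 hb1]
  · exact (key τ (c 0) a b (ha 0) (hb 0) ha1 hb1).mpr h
  · exact h ((key τ (c t) a b (ha t) (hb t) ha1 hb1).mp hg)
end

section
/- Fix n ≥ 1 and consider the Markov chain on the n-dimensional hypercube {false, true}ⁿ whose transition kernel, from state s, selects a coordinate i ∈ {1, …, n} uniformly at random and flips the i-th bit of s (so each of the n Hamming-neighbors of s is reached with probability 1/n). Start the chain at the all-false state and let T be the hitting time of the all-true state, defined on the trajectory measure of the chain. Then the expected value of T is at least 2^(n−1); in particular the hitting time of the exit state grows exponentially in n, i.e. it is Ω(2ⁿ). -/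
/-!
Let `k` be the Hamming distance from the current state to the all-`true` target `e`.
The potential `h k = ∑ j < k, c j`, where
`c j = n * (∑ i > j, n.choose i) / ((j + 1) * n.choose (j + 1))`, solves `h 0 = 0` and
`h k = 1 + (k / n) * h (k - 1) + ((n - k) / n) * h (k + 1)` for `0 < k ≤ n`.
For any chain, a finite `f` with `f e = 0` and `f ≤ 1 + P f` off `e` bounds the expected hitting
time of `e` from below: `𝔼[f (X t); T ≥ t] + ∑ j < t, ℙ(T > j)` is nondecreasing in `t`, the sum
is at most `𝔼 T`, and the first term tends to `0` when `𝔼 T < ∞`. Finally `h n ≥ c 0 = 2 ^ n - 1`.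
-/

open MeasureTheory Finset Filter Topology
open scoped ENNReal

lemma MeasureTheory.measure_eq_sum_measure_inter_preimage_singleton {Ω β : Type*}
    [MeasurableSpace Ω] [Fintype β] (μ : Measure Ω) {f : Ω → β}
    (hf : ∀ b, MeasurableSet (f ⁻¹' {b})) (s : Set Ω) :
    μ s = ∑ b, μ (s ∩ f ⁻¹' {b}) := by
  rw [← Measure.restrict_apply_univ, ← Set.preimage_univ (f := f), ← coe_univ,
    ← sum_measure_preimage_singleton _ fun b _ => hf b]
  simp_rw [Measure.restrict_apply (hf _), Set.inter_comm]

namespace MarkovTrajectory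

variable {S : Type*}

def prefixCylinder (t : ℕ) (path : ℕ → S) : Set (ℕ → S) := {ω | ∀ i ≤ t, ω i = path i}

def avoidsBefore (e : S) (t : ℕ) : Set (ℕ → S) := {ω | ∀ s < t, ω s ≠ e}

noncomputable def hitTime (e : S) (ω : ℕ → S) : ℝ≥0∞ := ⨅ (t : ℕ) (_ : ω t = e), (t : ℝ≥0∞)

lemma le_hitTime_iff {e : S} {ω : ℕ → S} {t : ℕ} :
    (t : ℝ≥0∞) ≤ hitTime e ω ↔ ω ∈ avoidsBefore e t := by
  simp only [hitTime, le_iInf_iff, Nat.cast_le, avoidsBefore, Set.mem_ofPred_eq]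
  exact ⟨fun h s hs hse => (h s hse).not_gt hs, fun h s hse => not_lt.1 fun hs => h s hs hse⟩

lemma sum_indicator_avoidsBefore_le_hitTime (e : S) (ω : ℕ → S) (t : ℕ) :
    ∑ j ∈ range t, (avoidsBefore e (j + 1)).indicator 1 ω ≤ hitTime e ω := by
  induction t with
  | zero => simp
  | succ t ih =>
    rw [sum_range_succ]
    by_cases h : ω ∈ avoidsBefore e (t + 1)
    · calc ∑ j ∈ range t, (avoidsBefore e (j + 1)).indicator 1 ω
            + (avoidsBefore e (t + 1)).indicator 1 ω
          ≤ (t : ℝ≥0∞) + 1 := by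
            rw [Set.indicator_of_mem h, Pi.one_apply]
            gcongr
            simpa using sum_le_card_nsmul (range t)
              (fun j => (avoidsBefore e (j + 1)).indicator (1 : (ℕ → S) → ℝ≥0∞) ω) 1
              fun j _ => Set.indicator_apply_le' (fun _ => le_rfl) (fun _ => zero_le_one)
        _ ≤ hitTime e ω := by exact_mod_cast le_hitTime_iff.2 h
    · simpa [Set.indicator_of_notMem h] using ih

lemma avoidsBefore_succ (e : S) (t : ℕ) :
    avoidsBefore e (t + 1) = avoidsBefore e t ∩ {ω | ω t ≠ e} := by
  ext ω
  simp only [avoidsBefore, Set.mem_inter_iff, Set.mem_ofPred_eq, Nat.lt_succ_iff_lt_or_eq,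
    or_imp, forall_and, forall_eq]

lemma avoidsBefore_succ_inter_eval {e u : S} (hu : u ≠ e) (t : ℕ) :
    avoidsBefore e (t + 1) ∩ {ω | ω t = u} = avoidsBefore e t ∩ {ω | ω t = u} := by
  ext ω
  simp only [avoidsBefore_succ, Set.mem_inter_iff, Set.mem_ofPred_eq]
  exact ⟨fun h => ⟨h.1.1, h.2⟩, fun h => ⟨⟨h.1, h.2 ▸ hu⟩, h.2⟩⟩

lemma prefixCylinder_inter_eval_succ (t : ℕ) (path : ℕ → S) (v : S) :
    prefixCylinder t path ∩ {ω | ω (t + 1) = v} =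
      prefixCylinder (t + 1) (Function.update path (t + 1) v) := by
  ext ω
  simp only [prefixCylinder, Set.mem_inter_iff, Set.mem_ofPred_eq, Nat.le_add_one_iff, or_imp,
    forall_and, forall_eq, Function.update_self]
  refine and_congr_left' (forall₂_congr fun i hi => ?_)
  rw [Function.update_of_ne (by omega)]

variable [MeasurableSpace S]

section

variable [MeasurableSingletonClass S]

lemma measurableSet_eval_eq (t : ℕ) (u : S) : MeasurableSet {ω : ℕ → S | ω t = u} :=
  (measurableSet_singleton u).preimage (measurable_pi_apply t)

lemma measurableSet_avoidsBefore (e : S) (t : ℕ) : MeasurableSet (avoidsBefore e t) := by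
  simp only [avoidsBefore, Set.ofPred_forall]
  exact .iInter fun s => .iInter fun _ => (measurableSet_eval_eq s e).compl

lemma sum_measure_avoidsBefore_le_lintegral_hitTime (μ : Measure (ℕ → S)) (e : S) (t : ℕ) :
    ∑ j ∈ range t, μ (avoidsBefore e (j + 1)) ≤ ∫⁻ ω, hitTime e ω ∂μ := by
  calc ∑ j ∈ range t, μ (avoidsBefore e (j + 1))
      = ∫⁻ ω, ∑ j ∈ range t, (avoidsBefore e (j + 1)).indicator 1 ω ∂μ := by
        rw [lintegral_finsetSum _ fun j _ =>
          measurable_one.indicator (measurableSet_avoidsBefore e (j + 1))]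
        simp_rw [lintegral_indicator_one (measurableSet_avoidsBefore e _)]
    _ ≤ ∫⁻ ω, hitTime e ω ∂μ :=
        lintegral_mono fun ω => sum_indicator_avoidsBefore_le_hitTime e ω t

end

section

variable [Fintype S]

/-- `𝔼[f (X t); T ≥ t]`, where `T` is the hitting time of `e`. -/
noncomputable def survivingPotential (μ : Measure (ℕ → S)) (e : S) (f : S → ℝ≥0∞) (t : ℕ) :
    ℝ≥0∞ :=
  ∑ v, μ (avoidsBefore e t ∩ {ω | ω t = v}) * f v

lemma survivingPotential_le (μ : Measure (ℕ → S)) (e : S) (f : S → ℝ≥0∞) (t : ℕ) :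
    survivingPotential μ e f t ≤ μ (avoidsBefore e t) * ∑ v, f v := by
  rw [survivingPotential, mul_sum]
  gcongr
  exact Set.inter_subset_left

end

variable [DecidableEq S]

def IsMarkovChainLaw (μ : Measure (ℕ → S)) (p : S → S → ℝ≥0∞) (s₀ : S) : Prop :=
  ∀ (t : ℕ) (path : ℕ → S), μ (prefixCylinder t path) =
    if path 0 = s₀ then ∏ i ∈ range t, p (path i) (path (i + 1)) else 0

namespace IsMarkovChainLaw

variable {μ : Measure (ℕ → S)} {p : S → S → ℝ≥0∞} {s₀ : S}

lemma measure_prefixCylinder_inter_eval_succ (hμ : IsMarkovChainLaw μ p s₀) (t : ℕ)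
    (path : ℕ → S) (v : S) :
    μ (prefixCylinder t path ∩ {ω | ω (t + 1) = v}) = μ (prefixCylinder t path) * p (path t) v := by
  rw [prefixCylinder_inter_eval_succ, hμ, hμ, Function.update_of_ne (by omega)]
  split_ifs
  · rw [prod_range_succ, Function.update_self, Function.update_of_ne (by omega)]
    congr 1
    refine prod_congr rfl fun i hi => ?_
    rw [mem_range] at hi
    rw [Function.update_of_ne (by omega), Function.update_of_ne (by omega)]
  · simp

variable [Fintype S]

lemma survivingPotential_zero (hμ : IsMarkovChainLaw μ p s₀) (e : S) (f : S → ℝ≥0∞) :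
    survivingPotential μ e f 0 = f s₀ := by
  have h : ∀ v, avoidsBefore e 0 ∩ {ω | ω 0 = v} = prefixCylinder 0 (fun _ => v) := by
    intro v
    ext ω
    simp [avoidsBefore, prefixCylinder]
  simp [survivingPotential, h, hμ 0]

variable [MeasurableSingletonClass S]

lemma measure_inter_eval_succ (hμ : IsMarkovChainLaw μ p s₀) {t : ℕ} {u v : S}
    {A : Set (ℕ → S)} (hA : ∀ ω ∈ A, prefixCylinder t ω ⊆ A) (hAu : A ⊆ {ω | ω t = u}) :
    μ (A ∩ {ω | ω (t + 1) = v}) = μ A * p u v := by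
  let r : (ℕ → S) → (Fin (t + 1) → S) := fun ω i => ω i
  have hr : ∀ q, MeasurableSet (r ⁻¹' {q}) := fun q =>
    (measurableSet_singleton q).preimage (measurable_pi_lambda _ fun i => measurable_pi_apply _)
  rw [measure_eq_sum_measure_inter_preimage_singleton μ hr,
    measure_eq_sum_measure_inter_preimage_singleton μ hr A, sum_mul]
  refine sum_congr rfl fun q _ => ?_
  rw [Set.inter_right_comm]
  rcases (A ∩ r ⁻¹' {q}).eq_empty_or_nonempty with h | ⟨ω₀, hω₀A, rfl⟩
  · simp [h]
  have hfiber : r ⁻¹' {r ω₀} = prefixCylinder t ω₀ := by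
    ext ω
    simp only [Set.mem_preimage, Set.mem_singleton_iff, r, funext_iff, Fin.forall_iff,
      Nat.lt_add_one_iff, prefixCylinder, Set.mem_ofPred_eq]
  rw [hfiber, Set.inter_eq_right.2 (hA ω₀ hω₀A), measure_prefixCylinder_inter_eval_succ hμ,
    hAu hω₀A]

lemma sum_measure_inter_eval_mul (hμ : IsMarkovChainLaw μ p s₀) {t : ℕ} (v : S)
    {A : Set (ℕ → S)} (hA : ∀ ω ∈ A, prefixCylinder t ω ⊆ A) :
    ∑ u, μ (A ∩ {ω | ω t = u}) * p u v = μ (A ∩ {ω | ω (t + 1) = v}) := by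
  rw [measure_eq_sum_measure_inter_preimage_singleton μ (f := fun ω => ω t)
    (measurableSet_eval_eq t)]
  refine sum_congr rfl fun u _ => ?_
  rw [Set.inter_right_comm]
  exact (measure_inter_eval_succ hμ
    (fun ω hω ω' hω' => Set.mem_inter (hA ω hω.1 hω') ((hω' t le_rfl).trans hω.2))
    Set.inter_subset_right).symm

variable {e : S} {f : S → ℝ≥0∞}

lemma survivingPotential_le_succ (hμ : IsMarkovChainLaw μ p s₀) (hfe : f e = 0)
    (hf : ∀ u ≠ e, f u ≤ 1 + ∑ v, p u v * f v) (t : ℕ) :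
    survivingPotential μ e f t ≤
      μ (avoidsBefore e (t + 1)) + survivingPotential μ e f (t + 1) := by
  set B := fun u => μ (avoidsBefore e (t + 1) ∩ {ω | ω t = u})
  have hsat : ∀ ω ∈ avoidsBefore e (t + 1), prefixCylinder t ω ⊆ avoidsBefore e (t + 1) :=
    fun ω hω ω' hω' s hs => hω' s (by omega) ▸ hω s hs
  have hstep : ∀ u, μ (avoidsBefore e t ∩ {ω | ω t = u}) * f u ≤ B u * (1 + ∑ v, p u v * f v) := by
    intro u
    rcases eq_or_ne u e with rfl | hu
    · simp [hfe]
    · simp only [B, avoidsBefore_succ_inter_eval hu]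
      gcongr
      exact hf u hu
  calc survivingPotential μ e f t ≤ ∑ u, B u * (1 + ∑ v, p u v * f v) :=
        sum_le_sum fun u _ => hstep u
    _ = ∑ u, B u + ∑ v, (∑ u, B u * p u v) * f v := by
        simp_rw [mul_add, mul_one, sum_add_distrib, mul_sum, sum_mul, mul_assoc]
        rw [sum_comm (γ := S)]
    _ = μ (avoidsBefore e (t + 1)) + survivingPotential μ e f (t + 1) := by
        rw [measure_eq_sum_measure_inter_preimage_singleton μ (f := fun ω => ω t)
          (measurableSet_eval_eq t) (avoidsBefore e (t + 1))]
        simp_rw [B, sum_measure_inter_eval_mul hμ _ hsat]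
        rfl

lemma le_sum_measure_avoidsBefore_add_survivingPotential (hμ : IsMarkovChainLaw μ p s₀)
    (hfe : f e = 0) (hf : ∀ u ≠ e, f u ≤ 1 + ∑ v, p u v * f v) (t : ℕ) :
    f s₀ ≤ ∑ j ∈ range t, μ (avoidsBefore e (j + 1)) + survivingPotential μ e f t := by
  induction t with
  | zero => simp [survivingPotential_zero hμ]
  | succ t ih =>
    calc f s₀ ≤ ∑ j ∈ range t, μ (avoidsBefore e (j + 1)) + survivingPotential μ e f t := ih
      _ ≤ ∑ j ∈ range t, μ (avoidsBefore e (j + 1)) +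
            (μ (avoidsBefore e (t + 1)) + survivingPotential μ e f (t + 1)) := by
          gcongr
          exact survivingPotential_le_succ hμ hfe hf t
      _ = _ := by rw [sum_range_succ, add_assoc]

theorem le_lintegral_hitTime (hμ : IsMarkovChainLaw μ p s₀) (hf_top : ∀ v, f v ≠ ⊤)
    (hfe : f e = 0) (hf : ∀ u ≠ e, f u ≤ 1 + ∑ v, p u v * f v) :
    f s₀ ≤ ∫⁻ ω, hitTime e ω ∂μ := by
  set I := ∫⁻ ω, hitTime e ω ∂μ
  have hsum := sum_measure_avoidsBefore_le_lintegral_hitTime μ e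
  have hbound : ∀ t, f s₀ ≤ I + μ (avoidsBefore e (t + 1)) * ∑ v, f v := fun t =>
    calc f s₀ ≤ ∑ j ∈ range (t + 1), μ (avoidsBefore e (j + 1)) +
          survivingPotential μ e f (t + 1) :=
          le_sum_measure_avoidsBefore_add_survivingPotential hμ hfe hf (t + 1)
      _ ≤ I + μ (avoidsBefore e (t + 1)) * ∑ v, f v :=
          add_le_add (hsum (t + 1)) (survivingPotential_le μ e f (t + 1))
  rcases eq_or_ne I ⊤ with hI | hI
  · exact hI ▸ le_top
  have hvanish : Tendsto (fun t => μ (avoidsBefore e (t + 1))) atTop (𝓝 0) :=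
    ENNReal.tendsto_atTop_zero_of_tsum_ne_top
      (ne_top_of_le_ne_top hI (ENNReal.tsum_le_of_sum_range_le hsum))
  have hlim : Tendsto (fun t => I + μ (avoidsBefore e (t + 1)) * ∑ v, f v) atTop (𝓝 I) := by
    simpa using tendsto_const_nhds.add
      (ENNReal.Tendsto.mul_const hvanish (.inr (ENNReal.sum_ne_top.2 fun v _ => hf_top v)))
  exact ge_of_tendsto' hlim hbound

end IsMarkovChainLaw

end MarkovTrajectory

namespace Ehrenfest

def tailChoose (n k : ℕ) : ℕ := ∑ i ∈ Ico (k + 1) (n + 1), n.choose i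

/-- The expected time for the Hamming distance to the target to drop from `k + 1` to `k`;
`potential n k` is then the expected hitting time of the target from distance `k`. -/
noncomputable def crossingTime (n k : ℕ) : ℝ≥0∞ :=
  n * tailChoose n k / ((k + 1) * n.choose (k + 1))

noncomputable def potential (n k : ℕ) : ℝ≥0∞ := ∑ j ∈ range k, crossingTime n j

lemma tailChoose_of_lt {n k : ℕ} (h : k < n) :
    tailChoose n k = n.choose (k + 1) + tailChoose n (k + 1) :=
  sum_eq_sum_Ico_succ_bot (by omega) _

lemma tailChoose_zero_add_one (n : ℕ) : tailChoose n 0 + 1 = 2 ^ n := by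
  rw [← Nat.sum_range_choose, range_eq_Ico, sum_eq_sum_Ico_succ_bot (by omega), tailChoose,
    Nat.choose_zero_right, add_comm]

lemma mul_crossingTime (n k : ℕ) :
    (k + 1) * n.choose (k + 1) * crossingTime n k = n * tailChoose n k := by
  refine ENNReal.mul_div_cancel' (fun h => ?_) (fun h => by simp [ENNReal.mul_eq_top] at h)
  have hk : n < k + 1 := by
    simpa [Nat.choose_eq_zero_iff, Nat.cast_add_one_ne_zero] using h
  simp [tailChoose, Ico_eq_empty_of_le (by omega : n + 1 ≤ k + 1)]

lemma succ_mul_crossingTime {n k : ℕ} (h : k < n) :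
    (k + 1) * crossingTime n k = n + (n - (k + 1) : ℕ) * crossingTime n (k + 1) := by
  have hC : (n.choose (k + 1) : ℝ≥0∞) ≠ 0 := by
    exact_mod_cast (Nat.choose_pos (by omega)).ne'
  have hpascal : (((k + 1 : ℕ) : ℝ≥0∞) + 1) * n.choose (k + 1 + 1) =
      n.choose (k + 1) * (n - (k + 1) : ℕ) := by
    exact_mod_cast (mul_comm _ _).trans (Nat.choose_succ_right_eq n (k + 1))
  rw [← ENNReal.mul_right_inj hC (ENNReal.natCast_ne_top _)]
  calc (n.choose (k + 1) : ℝ≥0∞) * ((k + 1) * crossingTime n k)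
      = n * tailChoose n k := by rw [← mul_crossingTime]; ring
    _ = n * n.choose (k + 1) + n * tailChoose n (k + 1) := by
        rw [tailChoose_of_lt h]; push_cast; ring
    _ = n * n.choose (k + 1) + n.choose (k + 1) * (n - (k + 1) : ℕ) * crossingTime n (k + 1) := by
        rw [← mul_crossingTime, hpascal]
    _ = n.choose (k + 1) * (n + (n - (k + 1) : ℕ) * crossingTime n (k + 1)) := by ring

lemma potential_succ (n k : ℕ) : potential n (k + 1) = potential n k + crossingTime n k :=
  sum_range_succ _ _

lemma mul_potential_succ {n k : ℕ} (h : k < n) :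
    n * potential n (k + 1) =
      n + (k + 1) * potential n k + (n - (k + 1) : ℕ) * potential n (k + 1 + 1) := by
  calc (n : ℝ≥0∞) * potential n (k + 1)
      = ((k + 1 : ℕ) + (n - (k + 1) : ℕ)) * potential n (k + 1) := by
        rw [← Nat.cast_add, Nat.add_sub_cancel' h]
    _ = (k + 1) * potential n k + (k + 1) * crossingTime n k +
          (n - (k + 1) : ℕ) * potential n (k + 1) := by
        rw [potential_succ n k]; push_cast; ring
    _ = n + (k + 1) * potential n k + (n - (k + 1) : ℕ) * potential n (k + 1 + 1) := by
        rw [succ_mul_crossingTime h, potential_succ n (k + 1)]; ring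

lemma crossingTime_ne_top {n k : ℕ} (h : k < n) : crossingTime n k ≠ ⊤ :=
  ENNReal.div_ne_top (by simp [ENNReal.mul_eq_top])
    (mul_ne_zero (by simp) (by exact_mod_cast (Nat.choose_pos (by omega)).ne'))

lemma potential_ne_top {n k : ℕ} (h : k ≤ n) : potential n k ≠ ⊤ :=
  ENNReal.sum_ne_top.2 fun j hj => crossingTime_ne_top (by simp at hj; omega)

lemma two_pow_pred_le_potential {n : ℕ} (hn : 1 ≤ n) : (2 : ℝ≥0∞) ^ (n - 1) ≤ potential n n := by
  have hc : crossingTime n 0 = tailChoose n 0 := by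
    have := mul_crossingTime n 0
    simp only [Nat.cast_zero, zero_add, Nat.choose_one_right, one_mul] at this
    exact (ENNReal.mul_right_inj (by simp; omega) (ENNReal.natCast_ne_top n)).1 this
  have htail : 2 ^ (n - 1) ≤ tailChoose n 0 := by
    have h2 : 2 ^ n = 2 * 2 ^ (n - 1) := by rw [← pow_succ', Nat.sub_add_cancel hn]
    have := tailChoose_zero_add_one n
    have := Nat.one_le_two_pow (n := n - 1)
    omega
  calc (2 : ℝ≥0∞) ^ (n - 1) ≤ crossingTime n 0 := by rw [hc]; exact_mod_cast htail
    _ ≤ potential n n := single_le_sum (fun _ _ => zero_le) (by simp; omega)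

end Ehrenfest

namespace Hypercube

variable {ι : Type*} [DecidableEq ι]

def flipBit (i : ι) (u : ι → Bool) : ι → Bool := Function.update u i (!u i)

lemma flipBit_injective (u : ι → Bool) : Function.Injective (flipBit · u) := by
  intro i j h
  by_contra hij
  have := congrFun h i
  simp [flipBit, Function.update_of_ne hij] at this

variable [Fintype ι]

lemma hammingDist_flipBit (i : ι) (u : ι → Bool) : hammingDist u (flipBit i u) = 1 := by
  rw [hammingDist, card_eq_one]
  refine ⟨i, ?_⟩
  ext j
  rw [mem_filter, mem_singleton]
  by_cases hj : j = i <;> simp [flipBit, hj]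

lemma hammingDist_eq_one_iff {u v : ι → Bool} : hammingDist u v = 1 ↔ ∃ i, flipBit i u = v := by
  refine ⟨fun h => ?_, fun ⟨i, hi⟩ => hi ▸ hammingDist_flipBit i u⟩
  obtain ⟨i, hi⟩ := card_eq_one.1 h
  have hdiff : ∀ j, u j ≠ v j ↔ j = i := fun j => by simpa using congrArg (j ∈ ·) hi
  refine ⟨i, funext fun j => ?_⟩
  by_cases hj : j = i
  · subst hj
    have := (hdiff j).2 rfl
    cases hu : u j <;> cases hv : v j <;> simp_all [flipBit]
  · simpa [flipBit, hj] using (hdiff j).not.2 hj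

lemma hammingDist_flipBit_of_eq {i : ι} {u e : ι → Bool} (h : u i = e i) :
    hammingDist (flipBit i u) e = hammingDist u e + 1 := by
  rw [hammingDist, hammingDist, ← card_insert_of_notMem (by simpa using h)]
  congr 1
  ext j
  rw [mem_filter, mem_insert, mem_filter]
  by_cases hj : j = i <;> simp [flipBit, hj, h]

lemma hammingDist_flipBit_of_ne {i : ι} {u e : ι → Bool} (h : u i ≠ e i) :
    hammingDist (flipBit i u) e + 1 = hammingDist u e := by
  rw [hammingDist, hammingDist,
    ← card_erase_add_one (s := univ.filter fun j => u j ≠ e j) (a := i) (by simpa using h)]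
  congr 2
  ext j
  rw [mem_filter, mem_erase, mem_filter]
  by_cases hj : j = i <;> simp [flipBit, hj, h]

lemma sum_ite_hammingDist_eq_one_mul {R : Type*} [NonUnitalNonAssocSemiring R] (u : ι → Bool)
    (c : R) (F : (ι → Bool) → R) :
    ∑ v, (if hammingDist u v = 1 then c else 0) * F v = c * ∑ i, F (flipBit i u) := by
  have himage : univ.filter (fun v => hammingDist u v = 1) = univ.image (flipBit · u) := by
    ext v
    simp [hammingDist_eq_one_iff]
  simp_rw [ite_mul, zero_mul, ← sum_filter, himage,
    sum_image fun i _ j _ h => flipBit_injective u h, mul_sum]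

lemma sum_comp_hammingDist_flipBit {M : Type*} [AddCommMonoid M] (g : ℕ → M) (u e : ι → Bool) :
    ∑ i, g (hammingDist (flipBit i u) e) =
      hammingDist u e • g (hammingDist u e - 1) +
        (Fintype.card ι - hammingDist u e) • g (hammingDist u e + 1) := by
  rw [← sum_filter_add_sum_filter_not univ (fun i => u i ≠ e i)]
  have hne : ∀ i ∈ univ.filter (fun i => u i ≠ e i),
      g (hammingDist (flipBit i u) e) = g (hammingDist u e - 1) := fun i hi => by
    rw [← hammingDist_flipBit_of_ne (mem_filter.1 hi).2, Nat.add_sub_cancel]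
  have heq : ∀ i ∈ univ.filter (fun i => ¬u i ≠ e i),
      g (hammingDist (flipBit i u) e) = g (hammingDist u e + 1) := fun i hi => by
    rw [hammingDist_flipBit_of_eq (not_not.1 (mem_filter.1 hi).2)]
  rw [sum_congr rfl hne, sum_congr rfl heq, sum_const, sum_const, ← card_univ,
    ← card_filter_add_card_filter_not (s := univ) (fun i => u i ≠ e i), hammingDist,
    Nat.add_sub_cancel_left]

lemma potential_hammingDist_eq_one_add_sum {u e : ι → Bool} (hu : u ≠ e) :
    Ehrenfest.potential (Fintype.card ι) (hammingDist u e) =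
      1 + ∑ v, (if hammingDist u v = 1 then (Fintype.card ι : ℝ≥0∞)⁻¹ else 0) *
        Ehrenfest.potential (Fintype.card ι) (hammingDist v e) := by
  set n := Fintype.card ι
  obtain ⟨k, hk⟩ := Nat.exists_eq_add_one_of_ne_zero (hammingDist_ne_zero.2 hu)
  have hkn : k < n := by
    have := hammingDist_le_card_fintype (x := u) (y := e)
    omega
  have hn : (n : ℝ≥0∞) ≠ 0 := by exact_mod_cast (by omega : n ≠ 0)
  rw [sum_ite_hammingDist_eq_one_mul, sum_comp_hammingDist_flipBit, hk, Nat.add_sub_cancel,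
    nsmul_eq_mul, nsmul_eq_mul, ← ENNReal.mul_right_inj hn (ENNReal.natCast_ne_top n), mul_add,
    mul_one, ← mul_assoc, ENNReal.mul_inv_cancel hn (ENNReal.natCast_ne_top n), one_mul,
    Ehrenfest.mul_potential_succ hkn]
  push_cast
  ring

end Hypercube

open MarkovTrajectory Ehrenfest in
theorem hypercube_hitting_time_exponential_general (n : ℕ) (hn : 1 ≤ n)
    (μ : Measure (ℕ → (Fin n → Bool)))
    (hcyl : ∀ (t : ℕ) (path : ℕ → (Fin n → Bool)),
      μ {ω | ∀ i ≤ t, ω i = path i} =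
        if path 0 = (fun _ => false) then
          ∏ i ∈ Finset.range t,
            (if (Finset.univ.filter (fun j : Fin n => path i j ≠ path (i + 1) j)).card = 1
              then ((n : ℝ≥0∞))⁻¹ else 0)
        else 0) :
    (2 : ℝ≥0∞) ^ (n - 1) ≤
      ∫⁻ ω, (⨅ (t : ℕ) (_ : ω t = fun _ => true), (t : ℝ≥0∞)) ∂μ := by
  have hμ : IsMarkovChainLaw μ (fun u v => if hammingDist u v = 1 then (n : ℝ≥0∞)⁻¹ else 0)
      (fun _ => false) := hcyl
  calc (2 : ℝ≥0∞) ^ (n - 1) ≤ potential n n := two_pow_pred_le_potential hn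
    _ = potential n (hammingDist (fun _ : Fin n => false) fun _ => true) := by simp [hammingDist]
    _ ≤ ∫⁻ ω, hitTime (fun _ => true) ω ∂μ :=
        hμ.le_lintegral_hitTime (f := fun v => potential n (hammingDist v fun _ => true))
          (fun v => potential_ne_top (hammingDist_le_card_fintype.trans_eq (Fintype.card_fin n)))
          (by simp [potential]) fun u hu => by
            simpa only [Fintype.card_fin] using
              (Hypercube.potential_hammingDist_eq_one_add_sum hu).le

/-- Random walk on the `n`-dimensional hypercube `Fin n → Bool`: from a state `s` a
coordinate is chosen uniformly at random and flipped, so each of the `n` Hamming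
neighbors of `s` is reached with probability `1/n`. Let `μ` be the trajectory measure
of the chain started at the all-`false` state (the measure on `ℕ → (Fin n → Bool)`
produced by the Ionescu–Tulcea construction), characterized here by its cylinder
probabilities: the probability that the first `t + 1` coordinates follow `path` equals
`∏_{i < t} p(path i, path (i+1))` if `path 0` is the all-`false` start, and `0`
otherwise, where `p(s, s') = 1/n` if `s` and `s'` differ in exactly one bit and `0`
otherwise. Let `T` be the hitting time of the all-`true` state, i.e. the least `t` with
`X t = exit` (and `∞` if there is no such `t`). Then `𝔼[T] ≥ 2 ^ (n - 1)`: the expected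
hitting time of the exit state grows exponentially in `n`, i.e. it is `Ω(2 ^ n)`. -/
theorem hypercube_hitting_time_exponential (n : ℕ) (hn : 1 ≤ n)
    (μ : Measure (ℕ → (Fin n → Bool))) [IsProbabilityMeasure μ]
    (hcyl : ∀ (t : ℕ) (path : ℕ → (Fin n → Bool)),
      μ {ω | ∀ i ≤ t, ω i = path i} =
        if path 0 = (fun _ => false) then
          ∏ i ∈ Finset.range t,
            (if (Finset.univ.filter (fun j : Fin n => path i j ≠ path (i + 1) j)).card = 1
              then ((n : ℝ≥0∞))⁻¹ else 0)
        else 0) :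
    (2 : ℝ≥0∞) ^ (n - 1) ≤
      ∫⁻ ω, (⨅ (t : ℕ) (_ : ω t = fun _ => true), (t : ℝ≥0∞)) ∂μ :=
  hypercube_hitting_time_exponential_general n hn μ hcyl
end
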